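/- arXiv:1805.04346 — 7 statements merged into one kernel-verified Lean document; each statement's English description precedes it below -/
import Mathlib

section
/- Consider a commuting square of categories and functors K ∘ F = G ∘ H with G : C → D fully faithful and H : A → C, K : B → D discrete isofibrations. If (1) F : A → B is fully faithful, and (2) an object b of B lies in the essential image of F if and only if K b lies in the essential image of G, then the square is a pullback up to equivalence: the canonical comparison functor from A to the pullback category of K along G is an equivalence. -/
open CategoryTheory


/-- A functor `U : A ⥤ B` is a *discrete isofibration* if every isomorphism
`f : b ≅ U.obj a` in `B` admits a unique lift to an isomorphism in `A` with codomain `a`. -/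
def DiscreteIsofibration {A B : Type*} [Category A] [Category B] (U : A ⥤ B) : Prop :=
  ∀ (a : A) (b : B) (f : b ≅ U.obj a),
    ∃! p : Σ' (src : A) (_ : src ≅ a), U.obj src = b,
      U.map p.2.1.hom = eqToHom p.2.2 ≫ f.hom

universe v₁ v₂ v₃ u₁ u₂ u₃

variable {B : Type u₁} {C : Type u₂} {D : Type u₃}
  [Category.{v₁} B] [Category.{v₂} C] [Category.{v₃} D]

/-- Objects of the strict pullback category of `K : B ⥤ D` along `G : C ⥤ D`. -/
structure PullbackCat (K : B ⥤ D) (G : C ⥤ D) : Type max u₁ u₂ where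
  b : B
  c : C
  eq : K.obj b = G.obj c

/-- Morphisms in the strict pullback category. -/
@[ext] structure PullbackCatHom {K : B ⥤ D} {G : C ⥤ D} (x y : PullbackCat K G) where
  f : x.b ⟶ y.b
  g : x.c ⟶ y.c
  w : K.map f ≫ eqToHom y.eq = eqToHom x.eq ≫ G.map g

instance {K : B ⥤ D} {G : C ⥤ D} : Category (PullbackCat K G) where
  Hom x y := PullbackCatHom x y
  id x := ⟨𝟙 x.b, 𝟙 x.c, by simp⟩
  comp u v := ⟨u.f ≫ v.f, u.g ≫ v.g, by
    simp only [Functor.map_comp, Category.assoc, v.w]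
    rw [← Category.assoc, u.w, Category.assoc]⟩
  id_comp u := by apply PullbackCatHom.ext <;> simp
  comp_id u := by apply PullbackCatHom.ext <;> simp
  assoc u v w := by apply PullbackCatHom.ext <;> simp


@[simp] lemma PullbackCat.id_f {K : B ⥤ D} {G : C ⥤ D} (x : PullbackCat K G) :
    (𝟙 x : x ⟶ x).f = 𝟙 x.b := rfl
@[simp] lemma PullbackCat.id_g {K : B ⥤ D} {G : C ⥤ D} (x : PullbackCat K G) :
    (𝟙 x : x ⟶ x).g = 𝟙 x.c := rfl
@[simp] lemma PullbackCat.comp_f {K : B ⥤ D} {G : C ⥤ D} {x y z : PullbackCat K G}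
    (u : x ⟶ y) (v : y ⟶ z) : (u ≫ v).f = u.f ≫ v.f := rfl
@[simp] lemma PullbackCat.comp_g {K : B ⥤ D} {G : C ⥤ D} {x y z : PullbackCat K G}
    (u : x ⟶ y) (v : y ⟶ z) : (u ≫ v).g = u.g ≫ v.g := rfl

/-- The second projection from the pullback category to `C`. -/
def pullbackCatSnd (K : B ⥤ D) (G : C ⥤ D) : PullbackCat K G ⥤ C where
  obj x := x.c
  map u := u.g

/-- The first projection from the pullback category to `B`. -/
def pullbackCatFst (K : B ⥤ D) (G : C ⥤ D) : PullbackCat K G ⥤ B where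
  obj x := x.b
  map u := u.f

/-- The canonical comparison functor into the pullback category induced by a strictly
commuting square `F ⋙ K = H ⋙ G`. -/
def pullbackCatComparison {A : Type*} [Category A] (K : B ⥤ D) (G : C ⥤ D)
    (F : A ⥤ B) (H : A ⥤ C) (hsq : F ⋙ K = H ⋙ G) : A ⥤ PullbackCat K G where
  obj a := ⟨F.obj a, H.obj a, Functor.congr_obj hsq a⟩
  map {a a'} f := ⟨F.map f, H.map f, by
    have h := Functor.congr_hom hsq f
    simp only [Functor.comp_map] at h
    rw [h]; simp⟩
  map_id a := by apply PullbackCatHom.ext <;> simp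
  map_comp u v := by apply PullbackCatHom.ext <;> simp

/-
Since `G` is fully faithful, a morphism of the pullback category is determined by its
`B`-component, and every morphism of `B` between first components extends, so the
projection `pullbackCatFst K G` is fully faithful. The comparison functor followed by this
projection is `F`, so it is fully faithful because `F` is. It is essentially surjective
because for `(b, c)` in the pullback, `K b = G c` puts `b` in the essential image of `F`,
and an isomorphism `F a ≅ b` lifts along the fully faithful projection.
-/

namespace PullbackCat

variable {K : B ⥤ D} {G : C ⥤ D}

lemma map_g_eq {x y : PullbackCat K G} (u : x ⟶ y) :
    G.map u.g = eqToHom x.eq.symm ≫ K.map u.f ≫ eqToHom y.eq := by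
  rw [u.w]
  simp

instance [G.Faithful] : (pullbackCatFst K G).Faithful where
  map_injective {x y} u v (h : u.f = v.f) :=
    PullbackCatHom.ext h (G.map_injective (by rw [map_g_eq, map_g_eq, h]))

instance [G.Full] [G.Faithful] : (pullbackCatFst K G).Full where
  map_surjective {x y} (f : x.b ⟶ y.b) :=
    ⟨⟨f, G.preimage (eqToHom x.eq.symm ≫ K.map f ≫ eqToHom y.eq), by simp⟩, rfl⟩

end PullbackCat

lemma pullbackCatComparison_comp_fst {A : Type*} [Category A] (K : B ⥤ D) (G : C ⥤ D)
    (F : A ⥤ B) (H : A ⥤ C) (hsq : F ⋙ K = H ⋙ G) :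
    pullbackCatComparison K G F H hsq ⋙ pullbackCatFst K G = F :=
  rfl

lemma pullbackCatComparison_essSurj {A : Type*} [Category A] (K : B ⥤ D) (G : C ⥤ D)
    [G.Full] [G.Faithful] (F : A ⥤ B) (H : A ⥤ C) (hsq : F ⋙ K = H ⋙ G)
    (hess : ∀ b : B, G.essImage (K.obj b) → F.essImage b) :
    (pullbackCatComparison K G F H hsq).EssSurj where
  mem_essImage x := by
    obtain ⟨a, ⟨e⟩⟩ := hess x.b ⟨x.c, ⟨eqToIso x.eq.symm⟩⟩
    exact ⟨a, ⟨(pullbackCatFst K G).preimageIso e⟩⟩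

theorem pullbackLemma_if_general
    {A : Type*} [Category A]
    (F : A ⥤ B) (H : A ⥤ C) (K : B ⥤ D) (G : C ⥤ D)
    (hsq : F ⋙ K = H ⋙ G)
    (hG : G.FullyFaithful)
    (hF : F.FullyFaithful)
    (hess : ∀ b : B, F.essImage b ↔ G.essImage (K.obj b)) :
    (pullbackCatComparison K G F H hsq).IsEquivalence := by
  have := hG.full
  have := hG.faithful
  have := hF.full
  have := hF.faithful
  have hcomp := pullbackCatComparison_comp_fst K G F H hsq
  have : (pullbackCatComparison K G F H hsq).Faithful := hcomp.faithful_of_comp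
  have : (pullbackCatComparison K G F H hsq).Full :=
    Functor.Full.of_comp_faithful_iso (eqToIso hcomp)
  have := pullbackCatComparison_essSurj K G F H hsq fun b => (hess b).mpr
  exact { }

/-- Pullback lemma, "if" direction: given a strictly commuting square `K ∘ F = G ∘ H`
with `G` fully faithful and `H`, `K` discrete isofibrations, if `F` is fully faithful and
an object `b` of `B` is in the essential image of `F` iff `K.obj b` is in the essential
image of `G`, then the canonical comparison functor from `A` to the pullback category of
`K` along `G` is an equivalence. -/
theorem pullbackLemma_if
    {A : Type*} [Category A]
    (F : A ⥤ B) (H : A ⥤ C) (K : B ⥤ D) (G : C ⥤ D)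
    (hsq : F ⋙ K = H ⋙ G)
    (hG : G.FullyFaithful)
    (hH : DiscreteIsofibration H) (hK : DiscreteIsofibration K)
    (hF : F.FullyFaithful)
    (hess : ∀ b : B, F.essImage b ↔ G.essImage (K.obj b)) :
    (pullbackCatComparison K G F H hsq).IsEquivalence :=
  pullbackLemma_if_general F H K G hsq hG hF hess
end

section
/- In the setting of the previous square (G fully faithful, H and K discrete isofibrations), if the square is a pullback then F is fully faithful and an object b of B is in the essential image of F if and only if K b is in the essential image of G. -/
open CategoryTheory


universe v₁ v₂ v₃ u₁ u₂ u₃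

variable {B : Type u₁} {C : Type u₂} {D : Type u₃}
  [Category.{v₁} B] [Category.{v₂} C] [Category.{v₃} D]

/-!
`F` is the comparison equivalence followed by the first projection of the strict pullback.
That projection is fully faithful because `G` is, and `b` lies in its essential image exactly
when `K b ≅ G c` for some `c`: lifting this isomorphism along the isofibration `K` gives an
object `(b', c)` of the pullback with `b' ≅ b`.
-/

section PullbackCat

variable {K : B ⥤ D} {G : C ⥤ D}

def fullyFaithfulPullbackCatFst (hG : G.FullyFaithful) : (pullbackCatFst K G).FullyFaithful where
  preimage {x y} f :=
    ⟨f, hG.preimage (eqToHom x.eq.symm ≫ K.map f ≫ eqToHom y.eq), by simp [pullbackCatFst]⟩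
  preimage_map {x y} u := PullbackCatHom.ext rfl (hG.map_injective (by simp [pullbackCatFst, u.w]))

lemma pullbackCatFst_essImage_iff (hK : DiscreteIsofibration K) (b : B) :
    (pullbackCatFst K G).essImage b ↔ G.essImage (K.obj b) := by
  constructor
  · rintro ⟨x, ⟨e⟩⟩
    exact ⟨x.c, ⟨eqToIso x.eq.symm ≪≫ K.mapIso e⟩⟩
  · rintro ⟨c, ⟨e⟩⟩
    obtain ⟨⟨b', e', hb'⟩, -⟩ := hK b (G.obj c) e
    exact ⟨⟨b', c, hb'⟩, ⟨e'⟩⟩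

end PullbackCat

theorem pullbackLemma_only_if_general
    {A : Type*} [Category A]
    (F : A ⥤ B) (H : A ⥤ C) (K : B ⥤ D) (G : C ⥤ D)
    (hsq : F ⋙ K = H ⋙ G)
    (hG : G.FullyFaithful)
    (hK : DiscreteIsofibration K)
    (hpb : (pullbackCatComparison K G F H hsq).IsEquivalence) :
    F.Full ∧ F.Faithful ∧ ∀ b : B, F.essImage b ↔ G.essImage (K.obj b) := by
  have hF : F.FullyFaithful :=
    (Functor.FullyFaithful.ofFullyFaithful (pullbackCatComparison K G F H hsq)).comp
      (fullyFaithfulPullbackCatFst hG)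
  refine ⟨hF.full, hF.faithful, fun b => ?_⟩
  rw [← pullbackCatFst_essImage_iff hK]
  exact Functor.essImage_comp_apply_of_essSurj (F := pullbackCatComparison K G F H hsq)
    (G := pullbackCatFst K G)

/-- Pullback lemma, "only if" direction: if a strictly commuting square `K ∘ F = G ∘ H`
with `G` fully faithful and `H`, `K` discrete isofibrations is a pullback (i.e. the
canonical comparison functor to the pullback category is an isomorphism of categories,
here: an equivalence), then `F` is fully faithful and an object `b` of `B` is in the
essential image of `F` iff `K.obj b` is in the essential image of `G`. -/
theorem pullbackLemma_only_if
    {A : Type*} [Category A]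
    (F : A ⥤ B) (H : A ⥤ C) (K : B ⥤ D) (G : C ⥤ D)
    (hsq : F ⋙ K = H ⋙ G)
    (hG : G.FullyFaithful)
    (hH : DiscreteIsofibration H) (hK : DiscreteIsofibration K)
    (hpb : (pullbackCatComparison K G F H hsq).IsEquivalence) :
    F.Full ∧ F.Faithful ∧ ∀ b : B, F.essImage b ↔ G.essImage (K.obj b) :=
  pullbackLemma_only_if_general F H K G hsq hG hK hpb
end

section
/- For monads S and T on a category C, every functor between the Kleisli categories of S and T commuting strictly with the free functors from C is of the form α_! (postcomposition of Kleisli morphisms with α) for a unique monad morphism α : S → T. Hence the Kleisli construction gives a fully faithful functor from the category of monads on C to categories under C. -/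
/-!
The identity of `S Y`, read as a Kleisli morphism `S Y ⟶ Y`, is the counit of the Kleisli
adjunction, and every Kleisli morphism `f : X ⟶ S Y` is the composite of the free morphism on `f`
with it. So a functor `Q` fixing the free functor is determined by `α_Y := Q (𝟙_{S Y})`, namely
`Q f = f ≫ α_Y`; functoriality of `Q` applied to `S.map g`, `η` and `μ` then gives naturality and
the two monad-morphism laws. Conversely `α_Y` is read off from `α_!` in the same way.
-/

open CategoryTheory

variable {C : Type u₁} [Category.{v₁} C]

/-- The action on homs of the functor `α_!` induced by a monad morphism `α : S ⟶ T`: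
a Kleisli morphism `f : X ⟶ S Y` is sent to `f ≫ α_Y : X ⟶ T Y`. -/
def kleisliPushMap {S T : Monad C} (α : S ⟶ T) {X Y : C} (f : X ⟶ (S : C ⥤ C).obj Y) :
    X ⟶ (T : C ⥤ C).obj Y := f ≫ α.app Y

lemma kleisliPushMap_comp {S T : Monad C} (α : S ⟶ T) {X Y Z : C}
    (f : X ⟶ (S : C ⥤ C).obj Y) (g : Y ⟶ (S : C ⥤ C).obj Z) :
    kleisliPushMap α (f ≫ (S : C ⥤ C).map g ≫ S.μ.app Z) =
      kleisliPushMap α f ≫ (T : C ⥤ C).map (kleisliPushMap α g) ≫ T.μ.app Z := by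
  unfold kleisliPushMap
  simp only [Category.assoc, MonadHom.app_μ, Functor.map_comp]
  rw [← Category.assoc ((S : C ⥤ C).map g), ← (S : C ⥤ C).map_comp]
  rw [α.toNatTrans.naturality_assoc]
  simp [Functor.map_comp]

/-- For a monad morphism `α : S ⟶ T`, the functor `α_! : Kl(S) ⥤ Kl(T)`: it is the
identity on objects and sends a Kleisli morphism `f : X ⟶ S Y` to `f ≫ α_Y`. -/
def kleisliPush {S T : Monad C} (α : S ⟶ T) : Kleisli S ⥤ Kleisli T where
  obj X := Kleisli.mk T X.of
  map {_ _} f := ⟨kleisliPushMap α f.of⟩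
  map_id X := Kleisli.hom_ext (α.app_η X.of)
  map_comp {_ _ _} f g := Kleisli.hom_ext (kleisliPushMap_comp α f.of g.of)

lemma kleisliPush_injective {S T : Monad C} :
    Function.Injective (kleisliPush : (S ⟶ T) → (Kleisli S ⥤ Kleisli T)) := by
  intro α β h
  ext Y
  let ε : Kleisli.mk S (S.obj Y) ⟶ Kleisli.mk S Y := Kleisli.Hom.mk (𝟙 (S.obj Y))
  have hY : (kleisliPush α).map ε ≍ (kleisliPush β).map ε := by rw [h]
  simpa [ε, kleisliPush, kleisliPushMap] using congrArg Kleisli.Hom.of (eq_of_heq hY)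

theorem exists_monadHom_eq_kleisliPushMap {S T : Monad C}
    (φ : ∀ {X Y : C}, (X ⟶ S.obj Y) → (X ⟶ T.obj Y))
    (map_bind : ∀ {X Y Z : C} (f : X ⟶ S.obj Y) (g : Y ⟶ S.obj Z),
      φ (f ≫ S.map g ≫ S.μ.app Z) = φ f ≫ T.map (φ g) ≫ T.μ.app Z)
    (map_pure : ∀ {X Y : C} (f : X ⟶ Y), φ (f ≫ S.η.app Y) = f ≫ T.η.app Y) :
    ∃ α : S ⟶ T, ∀ {X Y : C} (f : X ⟶ S.obj Y), φ f = kleisliPushMap α f := by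
  have φ_eq : ∀ {X Y : C} (f : X ⟶ S.obj Y), φ f = f ≫ φ (𝟙 (S.obj Y)) := fun {X Y} f =>
    calc φ f = φ ((f ≫ S.η.app (S.obj Y)) ≫ S.map (𝟙 _) ≫ S.μ.app Y) := by simp
      _ = f ≫ φ (𝟙 (S.obj Y)) ≫ T.η.app (T.obj Y) ≫ T.μ.app Y := by
        rw [map_bind, map_pure, Category.assoc, ← T.η.naturality_assoc]; rfl
      _ = f ≫ φ (𝟙 (S.obj Y)) := by simp
  have naturality : ∀ {X Y : C} (g : X ⟶ Y),
      S.map g ≫ φ (𝟙 (S.obj Y)) = φ (𝟙 (S.obj X)) ≫ T.map g := fun {X Y} g =>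
    calc S.map g ≫ φ (𝟙 (S.obj Y)) = φ (𝟙 (S.obj X) ≫ S.map (g ≫ S.η.app Y) ≫ S.μ.app Y) := by
          rw [← φ_eq]; simp
      _ = φ (𝟙 (S.obj X)) ≫ T.map g := by rw [map_bind, map_pure]; simp
  refine ⟨⟨⟨fun X => φ (𝟙 (S.obj X)), fun _ _ => naturality⟩, fun X => ?_, fun X => ?_⟩,
    fun f => φ_eq f⟩
  · simpa using (φ_eq (𝟙 X ≫ S.η.app X)).symm.trans (map_pure (𝟙 X))
  · calc S.μ.app X ≫ φ (𝟙 (S.obj X)) = φ (𝟙 _ ≫ S.map (𝟙 (S.obj X)) ≫ S.μ.app X) := by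
          rw [← φ_eq]; simp
      _ = (S.map (φ (𝟙 (S.obj X))) ≫ φ (𝟙 (S.obj (T.obj X)))) ≫ T.μ.app X := by
        rw [map_bind, naturality, Category.assoc]

/-- Destructuring `Q` turns the object equation in `hQ` into a substitution, after which `Q`
is literally the identity on objects. -/
theorem exists_eq_kleisliPush_of_toKleisli_comp_eq {S T : Monad C} (Q : Kleisli S ⥤ Kleisli T)
    (hQ : Kleisli.Adjunction.toKleisli S ⋙ Q = Kleisli.Adjunction.toKleisli T) :
    ∃ α : S ⟶ T, Q = kleisliPush α := by
  obtain ⟨obj, map, _, map_comp⟩ := Q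
  obtain rfl : obj = fun X => Kleisli.mk T X.of := funext fun X => Functor.congr_obj hQ X.of
  have map_pure : ∀ {X Y : C} (f : X ⟶ Y),
      (map (Kleisli.Hom.mk (f ≫ S.η.app Y))).of = f ≫ T.η.app Y := fun f =>
    congrArg Kleisli.Hom.of (eq_of_heq (congr_arg_heq (fun F : C ⥤ Kleisli T => F.map f) hQ))
  obtain ⟨α, hα⟩ := exists_monadHom_eq_kleisliPushMap (fun f => (map (Kleisli.Hom.mk f)).of)
    (fun f g => congrArg Kleisli.Hom.of (map_comp (Kleisli.Hom.mk f) (Kleisli.Hom.mk g)))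
    map_pure
  exact ⟨α, Functor.hext (fun _ => rfl) fun _ _ f => heq_of_eq (Kleisli.hom_ext (hα f.of))⟩

/-- Every functor between Kleisli categories commuting strictly with the free functors
from `C` is of the form `α_!` for a unique monad morphism `α : S ⟶ T`; hence the Kleisli
construction gives a fully faithful functor from the category of monads on `C` to
categories under `C`. -/
theorem kleisli_functor_under_base_eq_of_monadHom
    (S T : Monad C) (Q : Kleisli S ⥤ Kleisli T)
    (hQ : Kleisli.Adjunction.toKleisli S ⋙ Q = Kleisli.Adjunction.toKleisli T) :
    ∃! α : S ⟶ T, Q = kleisliPush α := by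
  obtain ⟨α, rfl⟩ := exists_eq_kleisliPush_of_toKleisli_comp_eq Q hQ
  exact ⟨α, rfl, fun β hβ => kleisliPush_injective hβ.symm⟩
end

section
/- For any bijective-on-objects functor F : A → B between small categories, the precomposition functor [F, 1] : [B, Set] → [A, Set] between functor categories is a discrete isofibration. -/
open CategoryTheory

/-!
Given `f : H ≅ F ⋙ G`, the lift is `G` with its value at `y = F x` replaced by `H x` (well
defined because `F` is bijective on objects) and its action on morphisms conjugated by the
components of `f`. Conversely, any lift agrees with this one on every object `F x` and its
isomorphism to `G` is forced to be `f` at `F x`; since every object of `B` is some `F x`,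
the lift is unique by `Functor.ext_of_iso`.
-/

universe u

namespace CategoryTheory.Functor

variable {A B C : Type*} [Category A] [Category B] [Category C] {F : A ⥤ B}
  {G : B ⥤ C} {H : A ⥤ C} (f : H ≅ F ⋙ G)

lemma whiskerLeft_hom_eq_eqToHom_comp_iff {G' : B ⥤ C} (i : G' ≅ G) (h : F ⋙ G' = H) :
    whiskerLeft F i.hom = eqToHom h ≫ f.hom ↔
      ∀ x, i.hom.app (F.obj x) = eqToHom (congr_obj h x) ≫ f.hom.app x := by
  rw [NatTrans.ext_iff, funext_iff]
  simp [eqToHom_app]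

lemma exists_whiskerLeft_hom_eq_eqToHom_comp (hF : Function.Bijective F.obj) :
    ∃ (G' : B ⥤ C) (i : G' ≅ G) (h : F ⋙ G' = H), whiskerLeft F i.hom = eqToHom h ≫ f.hom := by
  let e := (Equiv.ofBijective F.obj hF).symm
  have he (y : B) : F.obj (e y) = y := Equiv.ofBijective_apply_symm_apply F.obj hF y
  have he' (x : A) : e (F.obj x) = x := Equiv.ofBijective_symm_apply_apply F.obj hF x
  let i := (G.isoCopyObj (fun y => H.obj (e y))
    (fun y => (f.app (e y) ≪≫ eqToIso (congrArg G.obj (he y))).symm)).symm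
  have hi (x : A) : i.hom.app (F.obj x) = eqToHom (congrArg H.obj (he' x)) ≫ f.hom.app x :=
    eqToHom_naturality f.hom.app (he' x)
  have h : F ⋙ G.copyObj _ _ = H :=
    ext_of_iso (isoWhiskerLeft F i ≪≫ f.symm) (fun x => congrArg H.obj (he' x))
      fun x => (Iso.comp_inv_eq (f.app x)).2 (hi x)
  exact ⟨_, i, h, (whiskerLeft_hom_eq_eqToHom_comp_iff f i h).2 hi⟩

lemma whiskerLeft_hom_eq_eqToHom_comp_unique (hF : Function.Surjective F.obj)
    {G₁ G₂ : B ⥤ C} (i₁ : G₁ ≅ G) (i₂ : G₂ ≅ G) (h₁ : F ⋙ G₁ = H) (h₂ : F ⋙ G₂ = H)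
    (c₁ : whiskerLeft F i₁.hom = eqToHom h₁ ≫ f.hom)
    (c₂ : whiskerLeft F i₂.hom = eqToHom h₂ ≫ f.hom) :
    (⟨G₁, i₁, h₁⟩ : Σ' (G' : B ⥤ C) (_ : G' ≅ G), F ⋙ G' = H) = ⟨G₂, i₂, h₂⟩ := by
  rw [whiskerLeft_hom_eq_eqToHom_comp_iff] at c₁ c₂
  have hobj (y : B) : G₁.obj y = G₂.obj y := by
    obtain ⟨x, rfl⟩ := hF y
    exact (congr_obj h₁ x).trans (congr_obj h₂ x).symm
  obtain rfl : G₁ = G₂ := ext_of_iso (i₁ ≪≫ i₂.symm) hobj fun y => by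
    obtain ⟨x, rfl⟩ := hF y
    refine (Iso.comp_inv_eq (i₂.app (F.obj x))).2 ?_
    rw [c₁, Iso.app_hom, c₂, eqToHom_trans_assoc]
  obtain rfl : i₁ = i₂ := Iso.ext <| NatTrans.ext <| funext fun y => by
    obtain ⟨x, rfl⟩ := hF y
    rw [c₁, c₂]
  rfl

theorem discreteIsofibration_whiskeringLeft_obj (hF : Function.Bijective F.obj) :
    DiscreteIsofibration ((whiskeringLeft A B C).obj F) := by
  intro G H f
  obtain ⟨G', i, h, hc⟩ := exists_whiskerLeft_hom_eq_eqToHom_comp f hF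
  exact ⟨⟨G', i, h⟩, hc, fun ⟨_, i₂, h₂⟩ hc₂ =>
    whiskerLeft_hom_eq_eqToHom_comp_unique f hF.2 i₂ i h₂ h hc₂ hc⟩

end CategoryTheory.Functor

/-- For a bijective-on-objects functor `F : A ⥤ B` between small categories, the
precomposition functor `[F, 1] : [B, Set] ⥤ [A, Set]` is a discrete isofibration. -/
theorem whiskeringLeft_discreteIsofibration
    {A B : Type u} [SmallCategory A] [SmallCategory B]
    (F : A ⥤ B) (hF : Function.Bijective F.obj) :
    DiscreteIsofibration
      ((Functor.whiskeringLeft A B (Type u)).obj F :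
        (B ⥤ Type u) ⥤ (A ⥤ Type u)) :=
  Functor.discreteIsofibration_whiskeringLeft_obj hF
end

section
/- For an adjunction L ⊣ R : D → C the following are equivalent: (a) the natural transformation R ε (R applied to the counit) is invertible; (b) ε L is invertible; (c) η R is invertible; (d) L η is invertible. -/
/-!
The triangle identities say that `η R` is a section of `R ε` and `L η` a section of `ε L`, so
(a) ⇔ (c) and (b) ⇔ (d). If `R ε` is invertible then `R L η = η R L`, and naturality of `ε`
together with the triangle identity at `R L c` makes `L η_c` also a retraction of `ε_{L c}`;
this gives (a) ⇒ (b), and (d) ⇒ (c) is dual.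
-/

open CategoryTheory

namespace CategoryTheory.Adjunction

variable {C D : Type*} [Category C] [Category D] {L : C ⥤ D} {R : D ⥤ C} (adj : L ⊣ R)

lemma isIso_map_counit_app_iff (d : D) :
    IsIso (R.map (adj.counit.app d)) ↔ IsIso (adj.unit.app (R.obj d)) :=
  ⟨fun _ ↦ isIso_of_comp_hom_eq_id _ (adj.right_triangle_components d),
    fun _ ↦ isIso_of_hom_comp_eq_id _ (adj.right_triangle_components d)⟩

lemma isIso_counit_app_iff (c : C) :
    IsIso (adj.counit.app (L.obj c)) ↔ IsIso (L.map (adj.unit.app c)) :=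
  ⟨fun _ ↦ isIso_of_comp_hom_eq_id _ (adj.left_triangle_components c),
    fun _ ↦ isIso_of_hom_comp_eq_id _ (adj.left_triangle_components c)⟩

/-- Both sides are sections of the isomorphism `R.map (adj.counit.app (L.obj c))`. -/
lemma map_map_unit_app_eq_unit_app (c : C) [IsIso (R.map (adj.counit.app (L.obj c)))] :
    R.map (L.map (adj.unit.app c)) = adj.unit.app (R.obj (L.obj c)) :=
  (cancel_mono (R.map (adj.counit.app (L.obj c)))).1 (by simp [← R.map_comp])

/-- Both sides are retractions of the isomorphism `L.map (adj.unit.app (R.obj d))`. -/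
lemma map_map_counit_app_eq_counit_app (d : D) [IsIso (L.map (adj.unit.app (R.obj d)))] :
    L.map (R.map (adj.counit.app d)) = adj.counit.app (L.obj (R.obj d)) :=
  (cancel_epi (L.map (adj.unit.app (R.obj d)))).1 (by simp [← L.map_comp])

lemma isIso_counit_app_of_isIso_map_counit_app (c : C)
    [IsIso (R.map (adj.counit.app (L.obj c)))] : IsIso (adj.counit.app (L.obj c)) := by
  refine ⟨L.map (adj.unit.app c), ?_, adj.left_triangle_components c⟩
  dsimp only [Functor.comp_obj, Functor.id_obj]
  rw [← adj.counit_naturality, adj.map_map_unit_app_eq_unit_app, adj.left_triangle_components]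

lemma isIso_unit_app_of_isIso_map_unit_app (d : D)
    [IsIso (L.map (adj.unit.app (R.obj d)))] : IsIso (adj.unit.app (R.obj d)) := by
  refine ⟨R.map (adj.counit.app d), adj.right_triangle_components d, ?_⟩
  dsimp only [Functor.comp_obj, Functor.id_obj]
  rw [← adj.unit_naturality, adj.map_map_counit_app_eq_counit_app, adj.right_triangle_components]

end CategoryTheory.Adjunction

/-- For an adjunction `L ⊣ R` the following are equivalent: (a) `R` applied to the counit
is invertible; (b) the counit is invertible at every object of the form `L c`; (c) the
unit is invertible at every object of the form `R d`; (d) `L` applied to the unit is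
invertible. -/
theorem idempotent_adjunction_tfae
    {C D : Type*} [Category C] [Category D]
    (L : C ⥤ D) (R : D ⥤ C) (adj : L ⊣ R) :
    [ ∀ d : D, IsIso (R.map (adj.counit.app d)),
      ∀ c : C, IsIso (adj.counit.app (L.obj c)),
      ∀ d : D, IsIso (adj.unit.app (R.obj d)),
      ∀ c : C, IsIso (L.map (adj.unit.app c)) ].TFAE := by
  tfae_have 1 ↔ 3 := forall_congr' adj.isIso_map_counit_app_iff
  tfae_have 2 ↔ 4 := forall_congr' adj.isIso_counit_app_iff
  tfae_have 1 → 2 := fun h c ↦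
    have := h (L.obj c)
    adj.isIso_counit_app_of_isIso_map_counit_app c
  tfae_have 4 → 3 := fun h d ↦
    have := h (R.obj d)
    adj.isIso_unit_app_of_isIso_map_unit_app d
  tfae_finish
end

section
/- In the factorization C₀ →I A →K [C₀ᵒᵖ, Set] of the Yoneda embedding through a full subcategory A containing the representables, the nerve functor N_K : [C₀ᵒᵖ, Set] → [Aᵒᵖ, Set] is naturally isomorphic to right Kan extension along Iᵒᵖ : C₀ᵒᵖ → Aᵒᵖ, and a presheaf F : Aᵒᵖ → Set is in the essential image of N_K if and only if F is the right Kan extension of its own restriction along Iᵒᵖ. -/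
/-!
Because `K` is fully faithful and `I ⋙ K` is the Yoneda embedding, `K a ≅ A(I -, a)` for every
`a`. So a map `G ⟶ N_K X` assigns to `g : G a` a map `A(I -, a) ⟶ X`, i.e. a compatible family
of elements of `X c` indexed by the `f : I c ⟶ a`; evaluating at `f = 𝟙` identifies such maps
with maps `Iᵒᵖ ⋙ G ⟶ X`. Hence restriction along `Iᵒᵖ` is left adjoint to `N_K`, and
`N_K ≅ Ran_{Iᵒᵖ}` by uniqueness of adjoints. As `I` is fully faithful, the counit of
restriction ⊣ `Ran_{Iᵒᵖ}` is an isomorphism, so `Ran_{Iᵒᵖ}` is fully faithful and its essential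
image consists of the `F` whose unit `F ⟶ Ran (Iᵒᵖ ⋙ F)` is an isomorphism, i.e. which are right
Kan extensions of their restriction with identity counit.
-/

open CategoryTheory

universe u

variable {C₀ : Type u} [SmallCategory C₀]

/-- The nerve functor `N_K : [C₀ᵒᵖ, Set] ⥤ [Aᵒᵖ, Set]` associated to the inclusion
`K : A ⥤ [C₀ᵒᵖ, Set]` of a full subcategory of presheaves: it sends a presheaf `X` to the
presheaf `a ↦ Hom(K a, X)` on `A`. -/
noncomputable def presheafNerve (P : (C₀ᵒᵖ ⥤ Type u) → Prop) :
    (C₀ᵒᵖ ⥤ Type u) ⥤ ((ObjectProperty.FullSubcategory P)ᵒᵖ ⥤ Type u) :=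
  yoneda ⋙ (Functor.whiskeringLeft (ObjectProperty.FullSubcategory P)ᵒᵖ (C₀ᵒᵖ ⥤ Type u)ᵒᵖ (Type u)).obj
    (ObjectProperty.ι P).op

/-- The corestriction `I : C₀ ⥤ A` of the Yoneda embedding. -/
noncomputable def yonedaCorestriction (P : (C₀ᵒᵖ ⥤ Type u) → Prop)
    (hP : ∀ X : C₀, P (yoneda.obj X)) : C₀ ⥤ ObjectProperty.FullSubcategory P :=
  ObjectProperty.lift P yoneda hP

namespace CategoryTheory

open Opposite

universe w

section

variable {A : Type*} [Category A] {D : Type*} [Category D] {F G : A ⥤ D ⥤ Type w}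

lemma NatTrans.naturality_app_apply (α : F ⟶ G) {a a' : A} (f : a ⟶ a') (d : D)
    (x : (F.obj a).obj d) :
    (α.app a').app d ((F.map f).app d x) = (G.map f).app d ((α.app a).app d x) :=
  ConcreteCategory.congr_hom (congr_app (α.naturality f) d) x

lemma Iso.hom_inv_id_app_app_apply (e : F ≅ G) (a : A) (d : D) (x : (F.obj a).obj d) :
    (e.inv.app a).app d ((e.hom.app a).app d x) = x :=
  ConcreteCategory.congr_hom (congr_app (e.hom_inv_id_app a) d) x

lemma Iso.inv_hom_id_app_app_apply (e : F ≅ G) (a : A) (d : D) (x : (G.obj a).obj d) :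
    (e.hom.app a).app d ((e.inv.app a).app d x) = x :=
  ConcreteCategory.congr_hom (congr_app (e.inv_hom_id_app a) d) x

end

namespace Functor

variable {C : Type u} [SmallCategory C] {A : Type*} [Category.{u} A]

/-- The nerve `N_K : b ↦ Hom(K -, b)` of a functor `K`. -/
abbrev restrictedYoneda {B : Type*} [Category.{u} B] (K : A ⥤ B) : B ⥤ Aᵒᵖ ⥤ Type u :=
  yoneda ⋙ (whiskeringLeft Aᵒᵖ Bᵒᵖ (Type u)).obj K.op

variable {I : C ⥤ A} {K : A ⥤ Cᵒᵖ ⥤ Type u}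

/-- `(K a)(c) ≅ (yoneda c ⟶ K a) ≅ (K (I c) ⟶ K a) ≅ (I c ⟶ a)`, by the Yoneda lemma, `e` and
full faithfulness of `K`. -/
def FullyFaithful.isoRestrictedYoneda (hK : K.FullyFaithful) (e : I ⋙ K ≅ yoneda) :
    K ≅ I.restrictedYoneda :=
  K.rightUnitor.symm ≪≫
    isoWhiskerLeft K (curriedYonedaLemma'.symm ≪≫
      isoWhiskerLeft yoneda ((whiskeringLeft _ _ _).mapIso (NatIso.op e))) ≪≫
    isoWhiskerRight (isoWhiskerLeft K (isoWhiskerRight uliftYonedaIsoYoneda.symm _) ≪≫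
      hK.compUliftYonedaCompWhiskeringLeft ≪≫ uliftYonedaIsoYoneda)
      ((whiskeringLeft Cᵒᵖ Aᵒᵖ (Type u)).obj I.op)

/-- A map `K a ⟶ X` is determined by its values on the elements `e⁻¹ (𝟙 (I c))`. -/
def restrictionHomEquiv (e : K ≅ I.restrictedYoneda) (G : Aᵒᵖ ⥤ Type u)
    (X : Cᵒᵖ ⥤ Type u) : (I.op ⋙ G ⟶ X) ≃ (G ⟶ K.restrictedYoneda.obj X) where
  toFun ε :=
    { app a := ↾fun g =>
        { app c := ↾fun x => ε.app c (G.map ((e.hom.app a.unop).app c x).op g)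
          naturality c c' φ := by
            ext x
            simp [← NatTrans.naturality_apply ε] }
      naturality a a' ψ := by
        ext g
        apply NatTrans.ext
        funext c
        ext x
        simp [NatTrans.naturality_app_apply e.hom] }
  invFun η :=
    { app c := ↾fun g =>
        (η.app (op (I.obj c.unop)) g).app c ((e.inv.app (I.obj c.unop)).app c (𝟙 _))
      naturality c c' φ := by
        ext g
        dsimp
        rw [NatTrans.naturality_apply η]
        dsimp
        rw [← NatTrans.naturality_app_apply e.inv, ← NatTrans.naturality_apply,
          ← NatTrans.naturality_apply (e.inv.app _)]
        dsimp
        rw [Category.id_comp, Category.comp_id] }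
  left_inv ε := by
    ext c g
    dsimp
    rw [Iso.inv_hom_id_app_app_apply, op_id, G.map_id]
    rfl
  right_inv η := by
    ext a g
    apply NatTrans.ext
    funext c
    ext x
    dsimp
    rw [NatTrans.naturality_apply η]
    dsimp
    rw [← NatTrans.naturality_app_apply e.inv]
    dsimp
    rw [Category.id_comp, Iso.hom_inv_id_app_app_apply]

def restrictionAdjunction (e : K ≅ I.restrictedYoneda) :
    (whiskeringLeft Cᵒᵖ Aᵒᵖ (Type u)).obj I.op ⊣ K.restrictedYoneda :=
  Adjunction.mkOfHomEquiv
    { homEquiv := restrictionHomEquiv e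
      homEquiv_naturality_left_symm := by intros; rfl
      homEquiv_naturality_right := by intros; rfl }

noncomputable def restrictedYonedaIsoRan (e : K ≅ I.restrictedYoneda) :
    K.restrictedYoneda ≅ I.op.ran :=
  (restrictionAdjunction e).rightAdjointUniq (I.op.ranAdjunction (Type u))

end Functor

lemma Functor.essImage_ran_iff {C D H : Type*} [Category C] [Category D] [Category H]
    (L : C ⥤ D) [L.Full] [L.Faithful] [∀ F : C ⥤ H, HasPointwiseRightKanExtension L F]
    (F : D ⥤ H) : L.ran.essImage F ↔ F.IsRightKanExtension (𝟙 (L ⋙ F)) :=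
  have := (L.ranAdjunction H).fullyFaithfulROfIsIsoCounit.full
  have := (L.ranAdjunction H).fullyFaithfulROfIsIsoCounit.faithful
  (Adjunction.isIso_unit_app_iff_mem_essImage _).symm.trans (isIso_ranAdjunction_unit_app_iff _ _)

end CategoryTheory

/-- In the presheaf context `C₀ →I A →K [C₀ᵒᵖ, Set]` (with `A` a full subcategory of
presheaves containing the representables), the nerve functor `N_K` is naturally
isomorphic to right Kan extension along `Iᵒᵖ`, and a presheaf `F : Aᵒᵖ ⥤ Set` is in the
essential image of `N_K` if and only if `F` is the right Kan extension of its own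
restriction along `Iᵒᵖ` (with identity counit). -/
theorem presheafNerve_isoRan_and_essImage
    (P : (C₀ᵒᵖ ⥤ Type u) → Prop) (hP : ∀ X : C₀, P (yoneda.obj X)) :
    Nonempty (presheafNerve P ≅ (yonedaCorestriction P hP).op.ran) ∧
      (∀ F : (ObjectProperty.FullSubcategory P)ᵒᵖ ⥤ Type u,
        (presheafNerve P).essImage F ↔
          F.IsRightKanExtension (𝟙 ((yonedaCorestriction P hP).op ⋙ F))) := by
  let e : presheafNerve P ≅ (yonedaCorestriction P hP).op.ran :=
    Functor.restrictedYonedaIsoRan <|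
      (ObjectProperty.fullyFaithfulι P).isoRestrictedYoneda (ObjectProperty.liftCompιIso P yoneda hP)
  have : (yonedaCorestriction P hP).Full := inferInstanceAs (ObjectProperty.lift P yoneda hP).Full
  have : (yonedaCorestriction P hP).Faithful :=
    inferInstanceAs (ObjectProperty.lift P yoneda hP).Faithful
  refine ⟨⟨e⟩, fun F => ?_⟩
  rw [Functor.essImage_eq_of_natIso e]
  exact Functor.essImage_ran_iff _ F
end

section
/- Let A be the one-object full subcategory of Set on a fixed two-element set 2. The endofunctor X ↦ (X²)² ≅ X⁴ of Set is not a left Kan extension along the inclusion K : A → Set of any functor A → Set, even though X ↦ X² is such a left Kan extension. Consequently, endofunctors of Set that are left Kan extensions along K of their restriction to A are not closed under composition. -/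
open CategoryTheory

/-- The one-object full subcategory of `Set` on a fixed two-element set (here `Bool`). -/
def TwoArity : Type 1 := ObjectProperty.FullSubcategory (fun X : Type => X = Bool)

instance : Category TwoArity :=
  (inferInstance : Category (ObjectProperty.FullSubcategory (fun X : Type => X = Bool)))

/-- The inclusion `K : A ⥤ Set` of the one-object full subcategory on `Bool`. -/
def twoArityIncl : TwoArity ⥤ Type :=
  ObjectProperty.ι (fun X : Type => X = Bool)

/-- An endofunctor `F` of `Set` is *`A`-induced* if it is the left Kan extension along
`K` of its own restriction `K ⋙ F` (with identity unit). -/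
def AInduced (F : Type ⥤ Type) : Prop :=
  F.IsLeftKanExtension (𝟙 (twoArityIncl ⋙ F))

/-- The squaring endofunctor `X ↦ X × X` of `Set`. -/
def sqFunctor : Type ⥤ Type where
  obj X := X × X
  map f := TypeCat.ofHom (Prod.map f f)

/-!
`X ↦ X²` is corepresented by `2 = K 2`, and by Yoneda a functor corepresented by an object in
the image of a full functor `K` is the left Kan extension of its restriction along `K`.

Conversely, every element of a left Kan extension `F` along `K` has the form `F f y` with `y` in the
image of the unit and `f : K a ⟶ X`: the subfunctor of such elements receives the unit, so the
universal property makes it a retract of `F`. For `X ↦ X⁴` at `X = 4`, the element `(0, 1, 2, 3)`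
would then be the image of a quadruple under a map `2 → 4`, which takes only two values.
-/

namespace CategoryTheory.Functor

universe v w

variable {A C H : Type*} [Category A] [Category C] [Category H]

theorem isLeftKanExtension_of_existsUnique {K : A ⥤ C} {L : A ⥤ H} (F : C ⥤ H) (α : L ⟶ K ⋙ F)
    (h : ∀ (G : C ⥤ H) (β : L ⟶ K ⋙ G), ∃! τ : F ⟶ G, α ≫ whiskerLeft K τ = β) :
    F.IsLeftKanExtension α :=
  ⟨⟨Limits.IsInitial.ofUniqueHom
    (fun E => StructuredArrow.homMk (h E.right E.hom).exists.choose
      (h E.right E.hom).exists.choose_spec)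
    (fun E m => StructuredArrow.hom_ext _ _ <|
      (h E.right E.hom).unique (StructuredArrow.w m) (h E.right E.hom).exists.choose_spec)⟩⟩

theorem _root_.CategoryTheory.Subfunctor.eq_top_of_isLeftKanExtension {K : A ⥤ C}
    {L : A ⥤ Type w} {F : C ⥤ Type w} (α : L ⟶ K ⋙ F) [F.IsLeftKanExtension α] (S : Subfunctor F)
    (hS : ∀ a y, α.app a y ∈ S.obj (K.obj a)) : S = ⊤ := by
  let σ : L ⟶ K ⋙ S.toFunctor :=
    { app a := ↾fun y => ⟨α.app a y, hS a y⟩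
      naturality a b g := by
        ext y
        exact Subtype.ext (NatTrans.naturality_apply α g y :) }
  let ρ := F.descOfIsLeftKanExtension α S.toFunctor σ
  have hρ : ρ ≫ S.ι = 𝟙 F :=
    F.hom_ext_of_isLeftKanExtension α _ _ (by
      rw [whiskerLeft_comp, ← Category.assoc, descOfIsLeftKanExtension_fac]
      rfl)
  ext X x
  have hx : (ρ.app X x : F.obj X) = x := types_congr_hom (NatTrans.congr_app hρ X) x
  simp only [Subfunctor.top_obj, Set.top_eq_univ, Set.mem_univ, iff_true]
  exact hx ▸ (ρ.app X x).2

theorem exists_map_app_eq_of_isLeftKanExtension {K : A ⥤ C} {L : A ⥤ Type w} {F : C ⥤ Type w}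
    (α : L ⟶ K ⋙ F) [F.IsLeftKanExtension α] {X : C} (x : F.obj X) :
    ∃ (a : A) (f : K.obj a ⟶ X) (y : L.obj a), F.map f (α.app a y) = x := by
  let S : Subfunctor F :=
    { obj X := {x | ∃ (a : A) (f : K.obj a ⟶ X) (y : L.obj a), F.map f (α.app a y) = x}
      map g := by
        rintro _ ⟨a, f, y, rfl⟩
        exact ⟨a, f ≫ g, y, by simp⟩ }
  have hS : S = ⊤ := Subfunctor.eq_top_of_isLeftKanExtension α S fun a y => ⟨a, 𝟙 _, y, by simp⟩
  exact (hS ▸ Set.mem_univ x : x ∈ S.obj X)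

section Corepresentable

variable {D : Type*} [Category.{v} D]

theorem CorepresentableBy.app_eq {F G : D ⥤ Type v} {X : D} (e : F.CorepresentableBy X)
    (τ : F ⟶ G) {Y : D} (y : F.obj Y) :
    τ.app Y y = G.map (e.homEquiv.symm y) (τ.app X (e.homEquiv (𝟙 X))) := by
  rw [← NatTrans.naturality_apply, ← e.homEquiv_eq, Equiv.apply_symm_apply]

theorem isLeftKanExtension_of_corepresentableBy (K : A ⥤ D) [K.Full] (a : A) {F : D ⥤ Type v}
    (e : F.CorepresentableBy (K.obj a)) : F.IsLeftKanExtension (𝟙 (K ⋙ F)) := by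
  refine isLeftKanExtension_of_existsUnique F _ fun G β => ?_
  let τ : F ⟶ G :=
    { app X := ↾fun y => G.map (e.homEquiv.symm y) (β.app a (e.homEquiv (𝟙 _)))
      naturality X Y f := by
        ext y
        simp [← e.homEquiv_symm_comp] }
  refine ⟨τ, ?_, fun τ' hτ' => ?_⟩
  · ext b y
    obtain ⟨g, rfl⟩ : ∃ g, e.homEquiv (K.map g) = y := ⟨K.preimage (e.homEquiv.symm y), by simp⟩
    have hτ : τ.app _ (e.homEquiv (K.map g)) = G.map (K.map g) (β.app a (e.homEquiv (𝟙 _))) := by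
      simp [τ]
    show τ.app _ (e.homEquiv (K.map g)) = β.app b (e.homEquiv (K.map g))
    rw [hτ, e.homEquiv_eq (K.map g)]
    exact (NatTrans.naturality_apply β g _).symm
  · ext X y
    dsimp only at hτ'
    rw [Category.id_comp] at hτ'
    simp [e.app_eq τ' y, ← hτ', τ]

end Corepresentable

end CategoryTheory.Functor

open Functor

instance : twoArityIncl.Full := ObjectProperty.full_ι _

def sqFunctorCorepresentableBy : sqFunctor.CorepresentableBy Bool where
  homEquiv := TypeCat.homEquiv.trans (Equiv.boolArrowEquivProd _)
  homEquiv_comp _ _ := rfl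

theorem aInduced_sqFunctor : AInduced sqFunctor :=
  isLeftKanExtension_of_corepresentableBy twoArityIncl ⟨Bool, rfl⟩ sqFunctorCorepresentableBy

theorem not_aInduced_sqFunctor_comp_sqFunctor : ¬ AInduced (sqFunctor ⋙ sqFunctor) := by
  unfold AInduced
  intro
  obtain ⟨⟨_, rfl⟩, f, ⟨⟨b₀, b₁⟩, ⟨b₂, _⟩⟩, hf⟩ := exists_map_app_eq_of_isLeftKanExtension
    (𝟙 (twoArityIncl ⋙ sqFunctor ⋙ sqFunctor))
    (((0, 1), (2, 3)) : (Fin 4 × Fin 4) × (Fin 4 × Fin 4))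
  have h₀ : f b₀ = 0 := congrArg (fun q => q.1.1) hf
  have h₁ : f b₁ = 1 := congrArg (fun q => q.1.2) hf
  have h₂ : f b₂ = 2 := congrArg (fun q => q.2.1) hf
  change Bool at b₀ b₁ b₂
  cases b₀ <;> cases b₁ <;> cases b₂ <;> simp_all

/-- For the one-object full subcategory `A` of `Set` on a two-element set: the squaring
functor `X ↦ X²` is `A`-induced (a left Kan extension along `K : A ⥤ Set` of its
restriction), but its self-composite `X ↦ X⁴` is not.  Consequently, `A`-induced
endofunctors of `Set` are not closed under composition. -/
theorem twoArity_not_saturated :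
    AInduced sqFunctor ∧ ¬ AInduced (sqFunctor ⋙ sqFunctor) ∧
      ¬ (∀ F G : Type ⥤ Type, AInduced F → AInduced G → AInduced (F ⋙ G)) :=
  ⟨aInduced_sqFunctor, not_aInduced_sqFunctor_comp_sqFunctor,
    fun h => not_aInduced_sqFunctor_comp_sqFunctor (h _ _ aInduced_sqFunctor aInduced_sqFunctor)⟩
end
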